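/- Let H be a Hopf algebra over a field k. For a k-vector space V, consider the product space P(V) = ∏_{n≥0} V ⊗ H^{⊗n} and the map σ sending f = (fⁿ)_{n≥0} (with fⁿ ∈ V ⊗ H^{⊗n}) to the family whose n-th component is f^{n+1} viewed in (V ⊗ H^{⊗n}) ⊗ H by splitting off the last tensor factor. Let R⁰(V) be the largest subspace W ⊆ P(V) with σ(W) ⊆ W ⊗ H, and let R(V) be the largest subspace of R⁰(V) on which σ restricts to a partial H-comodule structure. Then the resulting functor R : Vect_k → PMod^H (acting on a linear map φ : V → W by the restriction of ∏ₙ (φ ⊗ H^{⊗n})) is right adjoint to the forgetful functor U : PMod^H → Vect_k, with unit η_M(m) = (ρⁿ(m))_{n≥0} for a partial comodule (M, ρ) and counit given by the projection of R(V) onto its degree-0 component V. -/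

import Mathlib

open TensorProduct CategoryTheory CategoryTheory.Limits

noncomputable section

universe u

section PartialComodules

variable (k : Type u) [Field k] (H : Type u) [Ring H] [HopfAlgebra k H]

/-- Multiply the last two tensor factors using the multiplication of `H`. -/
def mulLast (X : Type u) [AddCommGroup X] [Module k X] :
    ((X ⊗[k] H) ⊗[k] H) →ₗ[k] X ⊗[k] H :=
  (LinearMap.lTensor X (LinearMap.mul' k H)) ∘ₗ (TensorProduct.assoc k X H H).toLinearMap

/-- Comultiply the last tensor factor using the comultiplication of `H`. -/
def comulLast (X : Type u) [AddCommGroup X] [Module k X] :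
    (X ⊗[k] H) →ₗ[k] (X ⊗[k] H) ⊗[k] H :=
  (TensorProduct.assoc k X H H).symm.toLinearMap ∘ₗ LinearMap.lTensor X Coalgebra.comul

/-- Apply the antipode to the last tensor factor. -/
def antLast (X : Type u) [AddCommGroup X] [Module k X] :
    (X ⊗[k] H) →ₗ[k] X ⊗[k] H :=
  LinearMap.lTensor X (HopfAlgebra.antipode (R := k) (A := H))

/-- Apply the counit to the last tensor factor. -/
def counitLast (X : Type u) [AddCommGroup X] [Module k X] :
    (X ⊗[k] H) →ₗ[k] X :=
  (TensorProduct.rid k X).toLinearMap ∘ₗ LinearMap.lTensor X Coalgebra.counit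

/-- `(M, ρ)` is a (right, algebraic) partial `H`-comodule: (PCM1) `ρ` is counital, while
(PCM2) and (PCM3) express the partial coassociativity. -/
structure IsPartialComodule {M : Type u} [AddCommGroup M] [Module k M]
    (ρ : M →ₗ[k] M ⊗[k] H) : Prop where
  counit : counitLast k H M ∘ₗ ρ = LinearMap.id
  pcm2 :
    mulLast k H (M ⊗[k] H) ∘ₗ antLast k H ((M ⊗[k] H) ⊗[k] H) ∘ₗ
        LinearMap.rTensor H (comulLast k H M) ∘ₗ LinearMap.rTensor H ρ ∘ₗ ρ =
    mulLast k H (M ⊗[k] H) ∘ₗ antLast k H ((M ⊗[k] H) ⊗[k] H) ∘ₗ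
        LinearMap.rTensor H (LinearMap.rTensor H ρ) ∘ₗ LinearMap.rTensor H ρ ∘ₗ ρ
  pcm3 :
    LinearMap.rTensor H (mulLast k H M) ∘ₗ LinearMap.rTensor H (antLast k H (M ⊗[k] H)) ∘ₗ
        comulLast k H (M ⊗[k] H) ∘ₗ LinearMap.rTensor H ρ ∘ₗ ρ =
    LinearMap.rTensor H (mulLast k H M) ∘ₗ LinearMap.rTensor H (antLast k H (M ⊗[k] H)) ∘ₗ
        LinearMap.rTensor H (LinearMap.rTensor H ρ) ∘ₗ LinearMap.rTensor H ρ ∘ₗ ρ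

/-- A subspace `N` is a partial subcomodule when it is invariant under the coaction. -/
def IsSubcomodule {M : Type u} [AddCommGroup M] [Module k M]
    (ρ : M →ₗ[k] M ⊗[k] H) (N : Submodule k M) : Prop :=
  ∀ n ∈ N, ρ n ∈ LinearMap.range (LinearMap.rTensor H N.subtype)

end PartialComodules

section PartialComoduleCategory

variable (k : Type u) [Field k] (H : Type u) [Ring H] [HopfAlgebra k H]

/-- Objects of the category `PMod^H` of right partial `H`-comodules. -/
structure PComod where
  carrier : Type u
  [isAddCommGroup : AddCommGroup carrier]
  [isModule : Module k carrier]
  ρ : carrier →ₗ[k] carrier ⊗[k] H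
  isPartialComodule : IsPartialComodule k H ρ

attribute [instance] PComod.isAddCommGroup PComod.isModule

/-- Morphisms of partial comodules are linear maps commuting with the coactions. -/
instance : Category.{u} (PComod k H) where
  Hom A B := { f : A.carrier →ₗ[k] B.carrier // LinearMap.rTensor H f ∘ₗ A.ρ = B.ρ ∘ₗ f }
  id A := ⟨LinearMap.id, by simp [LinearMap.rTensor_id]⟩
  comp {A B C} f g := ⟨g.1 ∘ₗ f.1, by
    rw [LinearMap.rTensor_comp, LinearMap.comp_assoc, f.2, ← LinearMap.comp_assoc, g.2,
      LinearMap.comp_assoc]⟩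
  id_comp f := by apply Subtype.ext; simp
  comp_id f := by apply Subtype.ext; simp
  assoc f g h := by apply Subtype.ext; simp [LinearMap.comp_assoc]

/-- The forgetful functor from partial `H`-comodules to vector spaces. -/
def pforget : PComod k H ⥤ ModuleCat.{u} k where
  obj A := ModuleCat.of k A.carrier
  map f := ModuleCat.ofHom f.1
  map_id _ := rfl
  map_comp _ _ := rfl

end PartialComoduleCategory

section TPow

variable (k : Type u) [Field k] (H : Type u) [Ring H] [HopfAlgebra k H]
variable (M : Type u) [AddCommGroup M] [Module k M]


/-- The iterated tensor product `M ⊗ H^{⊗n}` (with all tensor factors associated to the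
left), as a bundled `k`-module. -/
def TPow : ℕ → ModuleCat.{u} k
  | 0 => ModuleCat.of k M
  | n + 1 => ModuleCat.of k (TPow n ⊗[k] H)

variable {M}

/-- `ρ ⊗ H^{⊗n} : M ⊗ H^{⊗n} → M ⊗ H^{⊗(n+1)}`. -/
def deepCoact (ρ : M →ₗ[k] M ⊗[k] H) : ∀ n : ℕ, TPow k H M n →ₗ[k] TPow k H M (n + 1)
  | 0 => ρ
  | n + 1 => LinearMap.rTensor H (deepCoact ρ n)

/-- The iterate `ρⁿ = (ρ ⊗ H^{⊗(n-1)}) ∘ ρ^{n-1} : M → M ⊗ H^{⊗n}`, with `ρ⁰ = id`. -/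
def coactPow (ρ : M →ₗ[k] M ⊗[k] H) : ∀ n : ℕ, M →ₗ[k] TPow k H M n
  | 0 => LinearMap.id
  | n + 1 => deepCoact k H ρ n ∘ₗ coactPow ρ n

/-- `M ⊗ ε ⊗ H^{⊗m} : M ⊗ H^{⊗(1+m)} → M ⊗ H^{⊗m}`. -/
def opCounit : ∀ m : ℕ, TPow k H M (1 + m) →ₗ[k] TPow k H M (0 + m)
  | 0 => counitLast k H M
  | m + 1 => LinearMap.rTensor H (opCounit m)

/-- `(M ⊗ H ⊗ μ)(M ⊗ H ⊗ H ⊗ S)(M ⊗ Δ ⊗ H) ⊗ H^{⊗m}` on `M ⊗ H^{⊗(2+m)}`. -/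
def opA2L : ∀ m : ℕ, TPow k H M (2 + m) →ₗ[k] TPow k H M (2 + m)
  | 0 => mulLast k H (M ⊗[k] H) ∘ₗ antLast k H ((M ⊗[k] H) ⊗[k] H) ∘ₗ
      LinearMap.rTensor H (comulLast k H M)
  | m + 1 => LinearMap.rTensor H (opA2L m)

/-- `(M ⊗ H ⊗ μ)(M ⊗ H ⊗ H ⊗ S) ⊗ H^{⊗m}` on `M ⊗ H^{⊗(3+m)}`. -/
def opA2R : ∀ m : ℕ, TPow k H M (3 + m) →ₗ[k] TPow k H M (2 + m)
  | 0 => mulLast k H (M ⊗[k] H) ∘ₗ antLast k H ((M ⊗[k] H) ⊗[k] H)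
  | m + 1 => LinearMap.rTensor H (opA2R m)

/-- `(M ⊗ μ ⊗ H)(M ⊗ H ⊗ S ⊗ H)(M ⊗ H ⊗ Δ) ⊗ H^{⊗m}` on `M ⊗ H^{⊗(2+m)}`. -/
def opA3L : ∀ m : ℕ, TPow k H M (2 + m) →ₗ[k] TPow k H M (2 + m)
  | 0 => LinearMap.rTensor H (mulLast k H M) ∘ₗ
      LinearMap.rTensor H (antLast k H (M ⊗[k] H)) ∘ₗ comulLast k H (M ⊗[k] H)
  | m + 1 => LinearMap.rTensor H (opA3L m)

/-- `(M ⊗ μ ⊗ H)(M ⊗ H ⊗ S ⊗ H) ⊗ H^{⊗m}` on `M ⊗ H^{⊗(3+m)}`. -/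
def opA3R : ∀ m : ℕ, TPow k H M (3 + m) →ₗ[k] TPow k H M (2 + m)
  | 0 => LinearMap.rTensor H (mulLast k H M) ∘ₗ
      LinearMap.rTensor H (antLast k H (M ⊗[k] H))
  | m + 1 => LinearMap.rTensor H (opA3R m)


end TPow

section CofreeConstruction

variable (k : Type u) [Field k] (H : Type u) [Ring H] [HopfAlgebra k H]

/-- The product space `P(V) = ∏_{n ≥ 0} V ⊗ H^{⊗n}`. -/
def ParProd (V : ModuleCat.{u} k) : Type u := ∀ n : ℕ, TPow k H V n

instance (V : ModuleCat.{u} k) : AddCommGroup (ParProd k H V) :=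
  inferInstanceAs (AddCommGroup (∀ n : ℕ, TPow k H V n))
instance (V : ModuleCat.{u} k) : Module k (ParProd k H V) :=
  inferInstanceAs (Module k (∀ n : ℕ, TPow k H V n))

/-- The shift map `σ`, sending `f = (fⁿ)ₙ` to the family with `n`-th component `f^{n+1}`,
viewed in `(V ⊗ H^{⊗n}) ⊗ H`. -/
def sigmaMap (V : ModuleCat.{u} k) :
    ParProd k H V →ₗ[k] ∀ n : ℕ, TPow k H V n ⊗[k] H :=
  LinearMap.pi (fun n => LinearMap.proj (n + 1))

/-- The canonical map `P(V) ⊗ H → ∏ₙ (V ⊗ H^{⊗n} ⊗ H)`. -/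
def canMap (V : ModuleCat.{u} k) :
    (ParProd k H V) ⊗[k] H →ₗ[k] ∀ n : ℕ, TPow k H V n ⊗[k] H :=
  LinearMap.pi (fun n => LinearMap.rTensor H (LinearMap.proj n))

/-- `σ(W) ⊆ W ⊗ H`: the image of `W` under `σ` lies in the image of the canonical
injection `W ⊗ H → ∏ₙ (V ⊗ H^{⊗n} ⊗ H)`. -/
def SigmaInvariant (V : ModuleCat.{u} k) (W : Submodule k (ParProd k H V)) : Prop :=
  ∀ w ∈ W, sigmaMap k H V w ∈
    LinearMap.range (canMap k H V ∘ₗ LinearMap.rTensor H W.subtype)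

/-- `σ` restricts to a partial `H`-comodule structure on `N`. -/
def SigmaPartialComodule (V : ModuleCat.{u} k) (N : Submodule k (ParProd k H V)) : Prop :=
  ∃ ρN : N →ₗ[k] N ⊗[k] H,
    (canMap k H V ∘ₗ LinearMap.rTensor H N.subtype) ∘ₗ ρN = sigmaMap k H V ∘ₗ N.subtype ∧
    IsPartialComodule k H ρN

/-- `R⁰(V)`: the largest subspace `W` of `P(V)` with `σ(W) ⊆ W ⊗ H`, i.e. the sum of all
such subspaces. -/
def R0sub (V : ModuleCat.{u} k) : Submodule k (ParProd k H V) :=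
  sSup { W : Submodule k (ParProd k H V) | SigmaInvariant k H V W }

/-- `R(V)`: the largest subspace of `R⁰(V)` on which `σ` restricts to a partial
`H`-comodule structure, i.e. the sum of all such subspaces. -/
def Rsub (V : ModuleCat.{u} k) : Submodule k (ParProd k H V) :=
  sSup { N : Submodule k (ParProd k H V) |
    N ≤ R0sub k H V ∧ SigmaInvariant k H V N ∧ SigmaPartialComodule k H V N }

/-- `φ ⊗ H^{⊗n} : V ⊗ H^{⊗n} → W ⊗ H^{⊗n}`. -/
def mapCore {V W : ModuleCat.{u} k} (φ : V →ₗ[k] W) :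
    ∀ n : ℕ, TPow k H V n →ₗ[k] TPow k H W n
  | 0 => φ
  | n + 1 => LinearMap.rTensor H (mapCore φ n)

/-- `∏ₙ (φ ⊗ H^{⊗n}) : P(V) → P(W)`. -/
def ParProdMap {V W : ModuleCat.{u} k} (φ : V →ₗ[k] W) : ParProd k H V →ₗ[k] ParProd k H W :=
  LinearMap.pi (fun n => mapCore k H φ n ∘ₗ LinearMap.proj n)

end CofreeConstruction

/-!
For a partial comodule `(M, ρ)`, a linear map `g : M → P(V)` with `σ ∘ g = (g ⊗ H) ∘ ρ`
("`σ`-morphism") satisfies `gⁿ⁺¹ = (gⁿ ⊗ H) ∘ ρ`, hence `gⁿ = (g⁰ ⊗ H^{⊗n}) ∘ ρⁿ`: it is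
determined by `g⁰ : M → V`, and `m ↦ (ρⁿ m)ₙ` is one. Since `H` is free over the field `k`, the
map `W ⊗ H → ∏ₙ (V ⊗ H^{⊗n} ⊗ H)` is injective, so a `σ`-invariant `W` carries a unique induced
coaction. The identities (PCM1)–(PCM3) are natural in `(M, ρ)`, so they pass to quotients and to
sums of images: the image of a `σ`-morphism is therefore one of the subspaces defining `R(V)`,
and `R(V)` itself is a partial comodule. Hence `σ`-morphisms `M → P(V)` are the same as comodule
morphisms `M → R(V)`, i.e. as linear maps `M → V`.
-/

section General

open LinearMap

variable {R : Type*} [CommSemiring R]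

theorem LinearMap.comp_comm_paste {A B C A' B' C' : Type*}
    [AddCommMonoid A] [Module R A] [AddCommMonoid B] [Module R B] [AddCommMonoid C]
    [Module R C] [AddCommMonoid A'] [Module R A'] [AddCommMonoid B'] [Module R B']
    [AddCommMonoid C'] [Module R C']
    {a : A →ₗ[R] B} {b : B →ₗ[R] C} {a' : A' →ₗ[R] B'} {b' : B' →ₗ[R] C'}
    {f : A →ₗ[R] A'} {g : B →ₗ[R] B'} {h : C →ₗ[R] C'}
    (h₁ : a' ∘ₗ f = g ∘ₗ a) (h₂ : b' ∘ₗ g = h ∘ₗ b) : (b' ∘ₗ a') ∘ₗ f = h ∘ₗ b ∘ₗ a := by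
  rw [comp_assoc, h₁, ← comp_assoc, h₂, comp_assoc]

theorem LinearMap.rTensor_comp_rTensor_of_comm {N A B A' B' : Type*} [AddCommMonoid N] [Module R N]
    [AddCommMonoid A] [Module R A] [AddCommMonoid B] [Module R B]
    [AddCommMonoid A'] [Module R A'] [AddCommMonoid B'] [Module R B']
    {a : A →ₗ[R] B} {a' : A' →ₗ[R] B'} {f : A →ₗ[R] A'} {g : B →ₗ[R] B'}
    (h : a' ∘ₗ f = g ∘ₗ a) : a'.rTensor N ∘ₗ f.rTensor N = g.rTensor N ∘ₗ a.rTensor N := by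
  rw [← rTensor_comp, h, rTensor_comp]

theorem Submodule.map_eqLocus_le {M M' P P' : Type*} [AddCommMonoid M] [Module R M]
    [AddCommMonoid M'] [Module R M'] [AddCommMonoid P] [Module R P] [AddCommMonoid P'] [Module R P']
    {a b : M →ₗ[R] P} {a' b' : M' →ₗ[R] P'} {f : M →ₗ[R] M'} {g : P →ₗ[R] P'}
    (ha : a' ∘ₗ f = g ∘ₗ a) (hb : b' ∘ₗ f = g ∘ₗ b) :
    (eqLocus a b).map f ≤ eqLocus a' b' := by
  rintro _ ⟨m, hm, rfl⟩
  change a' (f m) = b' (f m)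
  rw [← LinearMap.comp_apply, ha, ← LinearMap.comp_apply, hb, LinearMap.comp_apply,
    LinearMap.comp_apply, show a m = b m from hm]

theorem TensorProduct.equivFinsuppOfBasisRight_rTensor {κ M M' N : Type*} [DecidableEq κ]
    [AddCommMonoid M] [Module R M] [AddCommMonoid M'] [Module R M'] [AddCommMonoid N] [Module R N]
    (b : Module.Basis κ R N) (f : M →ₗ[R] M') (t : M ⊗[R] N) (i : κ) :
    equivFinsuppOfBasisRight b (f.rTensor N t) i = f (equivFinsuppOfBasisRight b t i) := by
  induction t using TensorProduct.induction_on with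
  | zero => simp
  | tmul m n => simp
  | add s t hs ht => simp [hs, ht]

theorem TensorProduct.pi_rTensor_proj_injective {ι N : Type*} {M : ι → Type*}
    [∀ i, AddCommMonoid (M i)] [∀ i, Module R (M i)] [AddCommMonoid N] [Module R N]
    [Module.Free R N] :
    Function.Injective (LinearMap.pi fun i => (proj i : (∀ i, M i) →ₗ[R] M i).rTensor N) := by
  classical
  intro s t hst
  apply (equivFinsuppOfBasisRight (Module.Free.chooseBasis R N)).injective
  ext j i
  have hs := equivFinsuppOfBasisRight_rTensor (Module.Free.chooseBasis R N) (proj i) s j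
  have ht := equivFinsuppOfBasisRight_rTensor (Module.Free.chooseBasis R N) (proj i) t j
  exact hs.symm.trans ((congrArg (equivFinsuppOfBasisRight _ · j) (congrFun hst i)).trans ht)

end General

section Naturality

variable (k : Type u) [Field k] (H : Type u) [Ring H] [HopfAlgebra k H]
variable {X Y : Type u} [AddCommGroup X] [Module k X] [AddCommGroup Y] [Module k Y]

open LinearMap

lemma counitLast_comp_rTensor (f : X →ₗ[k] Y) :
    counitLast k H Y ∘ₗ f.rTensor H = f ∘ₗ counitLast k H X := by
  apply TensorProduct.ext'
  intro x h
  simp [counitLast]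

lemma antLast_comp_rTensor (f : X →ₗ[k] Y) :
    antLast k H Y ∘ₗ f.rTensor H = f.rTensor H ∘ₗ antLast k H X := by
  simp [antLast, lTensor_comp_rTensor, rTensor_comp_lTensor]

lemma mulLast_comp_rTensor (f : X →ₗ[k] Y) :
    mulLast k H Y ∘ₗ (f.rTensor H).rTensor H = f.rTensor H ∘ₗ mulLast k H X := by
  apply TensorProduct.ext'
  intro t h
  induction t using TensorProduct.induction_on with
  | zero => simp
  | tmul x h' => simp [mulLast]
  | add s t hs ht => simp_all [TensorProduct.add_tmul]

lemma comulLast_comp_rTensor (f : X →ₗ[k] Y) :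
    comulLast k H Y ∘ₗ f.rTensor H = (f.rTensor H).rTensor H ∘ₗ comulLast k H X := by
  apply TensorProduct.ext'
  intro x h
  simp only [comulLast, coe_comp, Function.comp_apply, rTensor_tmul, lTensor_tmul,
    LinearEquiv.coe_coe]
  induction Coalgebra.comul (R := k) (A := H) h using TensorProduct.induction_on with
  | zero => simp
  | tmul a b => simp
  | add s t hs ht => simp_all [TensorProduct.tmul_add]

end Naturality

section Transport

variable (k : Type u) [Field k] (H : Type u) [Ring H] [HopfAlgebra k H]
variable {M M' : Type u} [AddCommGroup M] [Module k M] [AddCommGroup M'] [Module k M']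

open LinearMap

def pcm2Left (ρ : M →ₗ[k] M ⊗[k] H) : M →ₗ[k] (M ⊗[k] H) ⊗[k] H :=
  mulLast k H (M ⊗[k] H) ∘ₗ antLast k H ((M ⊗[k] H) ⊗[k] H) ∘ₗ
    rTensor H (comulLast k H M) ∘ₗ rTensor H ρ ∘ₗ ρ

def pcm2Right (ρ : M →ₗ[k] M ⊗[k] H) : M →ₗ[k] (M ⊗[k] H) ⊗[k] H :=
  mulLast k H (M ⊗[k] H) ∘ₗ antLast k H ((M ⊗[k] H) ⊗[k] H) ∘ₗ
    rTensor H (rTensor H ρ) ∘ₗ rTensor H ρ ∘ₗ ρ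

def pcm3Left (ρ : M →ₗ[k] M ⊗[k] H) : M →ₗ[k] (M ⊗[k] H) ⊗[k] H :=
  rTensor H (mulLast k H M) ∘ₗ rTensor H (antLast k H (M ⊗[k] H)) ∘ₗ
    comulLast k H (M ⊗[k] H) ∘ₗ rTensor H ρ ∘ₗ ρ

def pcm3Right (ρ : M →ₗ[k] M ⊗[k] H) : M →ₗ[k] (M ⊗[k] H) ⊗[k] H :=
  rTensor H (mulLast k H M) ∘ₗ rTensor H (antLast k H (M ⊗[k] H)) ∘ₗ
    rTensor H (rTensor H ρ) ∘ₗ rTensor H ρ ∘ₗ ρ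

def pcmLocus (ρ : M →ₗ[k] M ⊗[k] H) : Submodule k M :=
  eqLocus (counitLast k H M ∘ₗ ρ) LinearMap.id ⊓ eqLocus (pcm2Left k H ρ) (pcm2Right k H ρ) ⊓
    eqLocus (pcm3Left k H ρ) (pcm3Right k H ρ)

lemma isPartialComodule_iff_pcmLocus_eq_top (ρ : M →ₗ[k] M ⊗[k] H) :
    IsPartialComodule k H ρ ↔ pcmLocus k H ρ = ⊤ := by
  simp only [pcmLocus, inf_eq_top_iff, eqLocus_eq_top]
  exact ⟨fun h => ⟨⟨h.1, h.2⟩, h.3⟩, fun h => ⟨h.1.1, h.1.2, h.2⟩⟩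

variable {k H} {ρ : M →ₗ[k] M ⊗[k] H} {ρ' : M' →ₗ[k] M' ⊗[k] H} {f : M →ₗ[k] M'}

/-- Every map occurring in (PCM1)–(PCM3) is natural in `(M, ρ)`: paste the naturality
squares. -/
lemma map_pcmLocus_le (hf : f.rTensor H ∘ₗ ρ = ρ' ∘ₗ f) :
    (pcmLocus k H ρ).map f ≤ pcmLocus k H ρ' := by
  have hρ₁ : ρ' ∘ₗ f = f.rTensor H ∘ₗ ρ := hf.symm
  have hρ₂ := rTensor_comp_rTensor_of_comm (N := H) hρ₁
  have hρ₃ := rTensor_comp_rTensor_of_comm (N := H) hρ₂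
  have comul2 := rTensor_comp_rTensor_of_comm (N := H) (comulLast_comp_rTensor k H f)
  have comul3 := comulLast_comp_rTensor k H (f.rTensor H)
  have ant2 := antLast_comp_rTensor k H ((f.rTensor H).rTensor H)
  have ant3 := rTensor_comp_rTensor_of_comm (N := H) (antLast_comp_rTensor k H (f.rTensor H))
  have mul2 := mulLast_comp_rTensor k H (f.rTensor H)
  have mul3 := rTensor_comp_rTensor_of_comm (N := H) (mulLast_comp_rTensor k H f)
  have hρρ := comp_comm_paste hρ₁ hρ₂
  refine (Submodule.map_inf_le _).trans (inf_le_inf ((Submodule.map_inf_le _).trans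
    (inf_le_inf ?_ ?_)) ?_)
  · exact Submodule.map_eqLocus_le (comp_comm_paste hρ₁ (counitLast_comp_rTensor k H f))
      (by rw [id_comp, comp_id])
  · exact Submodule.map_eqLocus_le
      (comp_comm_paste (comp_comm_paste (comp_comm_paste hρρ comul2) ant2) mul2)
      (comp_comm_paste (comp_comm_paste (comp_comm_paste hρρ hρ₃) ant2) mul2)
  · exact Submodule.map_eqLocus_le
      (comp_comm_paste (comp_comm_paste (comp_comm_paste hρρ comul3) ant3) mul3)
      (comp_comm_paste (comp_comm_paste (comp_comm_paste hρρ hρ₃) ant3) mul3)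

lemma range_le_pcmLocus (hf : f.rTensor H ∘ₗ ρ = ρ' ∘ₗ f) (hρ : IsPartialComodule k H ρ) :
    range f ≤ pcmLocus k H ρ' := by
  rw [range_eq_map, ← (isPartialComodule_iff_pcmLocus_eq_top k H ρ).mp hρ]
  exact map_pcmLocus_le hf

lemma IsPartialComodule.of_surjective (hf : f.rTensor H ∘ₗ ρ = ρ' ∘ₗ f)
    (hsurj : Function.Surjective f) (hρ : IsPartialComodule k H ρ) :
    IsPartialComodule k H ρ' := by
  rw [isPartialComodule_iff_pcmLocus_eq_top, eq_top_iff, ← range_eq_top.mpr hsurj]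
  exact range_le_pcmLocus hf hρ

end Transport

section SigmaHom

variable {k : Type u} [Field k] {H : Type u} [Ring H] [HopfAlgebra k H]
variable {M M' : Type u} [AddCommGroup M] [Module k M] [AddCommGroup M'] [Module k M']
variable {V : ModuleCat.{u} k}

open LinearMap

variable (k H) in
def IsSigmaHom (ρ : M →ₗ[k] M ⊗[k] H) (g : M →ₗ[k] ParProd k H V) : Prop :=
  sigmaMap k H V ∘ₗ g = canMap k H V ∘ₗ g.rTensor H ∘ₗ ρ

/-- As `sigmaMap k H V (g m) n` is `g m (n + 1)`, this says `gⁿ⁺¹ = (gⁿ ⊗ H) ∘ ρ`. -/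
lemma isSigmaHom_iff {ρ : M →ₗ[k] M ⊗[k] H} {g : M →ₗ[k] ParProd k H V} :
    IsSigmaHom k H ρ g ↔ ∀ m n, sigmaMap k H V (g m) n = (proj n ∘ₗ g).rTensor H (ρ m) := by
  refine ⟨fun h m n => ?_, fun h => ?_⟩
  · exact (congrFun congr($h m) n).trans (rTensor_comp_apply _ _ _ _).symm
  · ext m n
    exact (h m n).trans (rTensor_comp_apply _ _ _ _)

lemma IsSigmaHom.comp {ρ : M →ₗ[k] M ⊗[k] H} {ρ' : M' →ₗ[k] M' ⊗[k] H}
    {g : M' →ₗ[k] ParProd k H V} (hg : IsSigmaHom k H ρ' g) {f : M →ₗ[k] M'}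
    (hf : f.rTensor H ∘ₗ ρ = ρ' ∘ₗ f) : IsSigmaHom k H ρ (g ∘ₗ f) := by
  unfold IsSigmaHom at hg ⊢
  rw [← comp_assoc, hg, comp_assoc, comp_assoc, ← hf, rTensor_comp, comp_assoc]

lemma IsSigmaHom.parProdMap_comp {W : ModuleCat.{u} k} {ρ : M →ₗ[k] M ⊗[k] H}
    {g : M →ₗ[k] ParProd k H V} (hg : IsSigmaHom k H ρ g) (φ : V →ₗ[k] W) :
    IsSigmaHom k H ρ (ParProdMap k H φ ∘ₗ g) := by
  rw [isSigmaHom_iff] at hg ⊢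
  intro m n
  change (mapCore k H φ n).rTensor H (sigmaMap k H V (g m) n) = _
  rw [hg, ← rTensor_comp_apply]
  rfl

lemma coactPow_succ_eq (ρ : M →ₗ[k] M ⊗[k] H) (n : ℕ) :
    coactPow k H ρ (n + 1) = (coactPow k H ρ n).rTensor H ∘ₗ ρ := by
  induction n with
  | zero => exact (congrArg (· ∘ₗ ρ) (rTensor_id H M)).symm
  | succ n ih =>
    change (deepCoact k H ρ n).rTensor H ∘ₗ coactPow k H ρ (n + 1) = _
    conv_lhs => rw [ih, ← comp_assoc, ← rTensor_comp]
    rfl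

lemma isSigmaHom_pi_coactPow (ρ : M →ₗ[k] M ⊗[k] H) :
    IsSigmaHom k H ρ (V := ModuleCat.of k M) (LinearMap.pi (coactPow k H ρ)) :=
  isSigmaHom_iff.mpr fun m n => congr($(coactPow_succ_eq ρ n) m)

lemma IsSigmaHom.proj_comp_eq {ρ : M →ₗ[k] M ⊗[k] H} {g : M →ₗ[k] ParProd k H V}
    (hg : IsSigmaHom k H ρ g) (n : ℕ) :
    proj n ∘ₗ g =
      mapCore k H (V := ModuleCat.of k M) ((proj 0 : ParProd k H V →ₗ[k] V) ∘ₗ g) n ∘ₗ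
        coactPow k H ρ n := by
  induction n with
  | zero => rfl
  | succ n ih =>
    ext m
    change sigmaMap k H V (g m) n = _
    rw [isSigmaHom_iff.mp hg, ih, coactPow_succ_eq]
    exact rTensor_comp_apply _ _ _ _

end SigmaHom

section InvariantSubspace

variable {k : Type u} [Field k] {H : Type u} [Ring H] [HopfAlgebra k H]
variable {M : Type u} [AddCommGroup M] [Module k M]
variable {V : ModuleCat.{u} k}

open LinearMap

lemma canMap_comp_rTensor_subtype_injective (W : Submodule k (ParProd k H V)) :
    Function.Injective (canMap k H V ∘ₗ W.subtype.rTensor H) :=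
  TensorProduct.pi_rTensor_proj_injective.comp
    (Module.Flat.rTensor_preserves_injective_linearMap _ W.injective_subtype)

def SigmaInvariant.coact {W : Submodule k (ParProd k H V)}
    (hW : SigmaInvariant k H V W) : W →ₗ[k] W ⊗[k] H :=
  (LinearEquiv.ofInjective _ (canMap_comp_rTensor_subtype_injective W)).symm.toLinearMap ∘ₗ
    (sigmaMap k H V ∘ₗ W.subtype).codRestrict _ fun w => hW w w.2

lemma SigmaInvariant.isSigmaHom_subtype {W : Submodule k (ParProd k H V)}
    (hW : SigmaInvariant k H V W) : IsSigmaHom k H hW.coact W.subtype := by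
  ext w : 1
  exact congrArg Subtype.val
    ((LinearEquiv.ofInjective _ (canMap_comp_rTensor_subtype_injective W)).apply_symm_apply
      ⟨_, hW w w.2⟩).symm

lemma SigmaInvariant.rTensor_comp_eq_coact_comp {W : Submodule k (ParProd k H V)}
    (hW : SigmaInvariant k H V W) {ρ : M →ₗ[k] M ⊗[k] H} {g : M →ₗ[k] W}
    (hg : IsSigmaHom k H ρ (W.subtype ∘ₗ g)) : g.rTensor H ∘ₗ ρ = hW.coact ∘ₗ g := by
  refine (cancel_left (canMap_comp_rTensor_subtype_injective W)).mp ?_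
  have hW' : sigmaMap k H V ∘ₗ W.subtype = canMap k H V ∘ₗ W.subtype.rTensor H ∘ₗ hW.coact :=
    hW.isSigmaHom_subtype
  unfold IsSigmaHom at hg
  rw [rTensor_comp] at hg
  calc (canMap k H V ∘ₗ W.subtype.rTensor H) ∘ₗ g.rTensor H ∘ₗ ρ
      = sigmaMap k H V ∘ₗ W.subtype ∘ₗ g := hg.symm
    _ = (canMap k H V ∘ₗ W.subtype.rTensor H) ∘ₗ hW.coact ∘ₗ g := by
      rw [← comp_assoc, hW']; rfl

end InvariantSubspace

section Cofree

variable {k : Type u} [Field k] {H : Type u} [Ring H] [HopfAlgebra k H]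
variable {M : Type u} [AddCommGroup M] [Module k M]
variable {V : ModuleCat.{u} k}

open LinearMap

lemma range_canMap_comp_rTensor_subtype_mono {N W : Submodule k (ParProd k H V)} (h : N ≤ W) :
    range (canMap k H V ∘ₗ N.subtype.rTensor H) ≤ range (canMap k H V ∘ₗ W.subtype.rTensor H) := by
  rw [← Submodule.subtype_comp_inclusion N W h, rTensor_comp, ← comp_assoc]
  exact range_comp_le_range _ _

lemma sigmaInvariant_sSup {S : Set (Submodule k (ParProd k H V))}
    (hS : ∀ N ∈ S, SigmaInvariant k H V N) : SigmaInvariant k H V (sSup S) := by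
  suffices sSup S ≤ (range (canMap k H V ∘ₗ (sSup S).subtype.rTensor H)).comap (sigmaMap k H V)
    from fun w hw => this hw
  exact sSup_le fun N hN w hw =>
    range_canMap_comp_rTensor_subtype_mono (le_sSup hN) (hS N hN w hw)

variable (k H) in
lemma sigmaInvariant_Rsub (V : ModuleCat.{u} k) : SigmaInvariant k H V (Rsub k H V) :=
  sigmaInvariant_sSup fun _ hN => hN.2.1

/-- Each admissible `N` maps into `R(V)` by a comodule morphism, so (PCM1)–(PCM3) hold on
the span of their images, which is `R(V)`. -/
lemma isPartialComodule_Rsub (V : ModuleCat.{u} k) :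
    IsPartialComodule k H (sigmaInvariant_Rsub k H V).coact := by
  rw [isPartialComodule_iff_pcmLocus_eq_top, eq_top_iff]
  suffices Rsub k H V ≤ (pcmLocus k H (sigmaInvariant_Rsub k H V).coact).map (Rsub k H V).subtype by
    rintro ⟨x, hx⟩ -
    obtain ⟨y, hy, rfl⟩ := this hx
    exact hy
  refine sSup_le fun N hN y hy => ?_
  have hNR : N ≤ Rsub k H V := le_sSup hN
  obtain ⟨-, -, ρN, hρN, hpc⟩ := hN
  have hcompat := (sigmaInvariant_Rsub k H V).rTensor_comp_eq_coact_comp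
    (g := Submodule.inclusion hNR) (ρ := ρN) hρN.symm
  exact ⟨_, range_le_pcmLocus hcompat hpc ⟨⟨y, hy⟩, rfl⟩, rfl⟩

/-- The image of `g` is `σ`-invariant, and the coaction it inherits is a quotient of `ρ`. -/
lemma range_le_Rsub {ρ : M →ₗ[k] M ⊗[k] H} (hρ : IsPartialComodule k H ρ)
    {g : M →ₗ[k] ParProd k H V} (hg : IsSigmaHom k H ρ g) : range g ≤ Rsub k H V := by
  have hinv : SigmaInvariant k H V (range g) := by
    rintro _ ⟨m, rfl⟩
    refine ⟨g.rangeRestrict.rTensor H (ρ m), ?_⟩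
    rw [LinearMap.comp_apply, ← rTensor_comp_apply]
    exact congr($hg m).symm
  have hcompat := hinv.rTensor_comp_eq_coact_comp (g := g.rangeRestrict) hg
  exact le_sSup ⟨le_sSup hinv, hinv, hinv.coact, hinv.isSigmaHom_subtype.symm,
    hρ.of_surjective hcompat g.surjective_rangeRestrict⟩

variable (k H) in
def cofree (V : ModuleCat.{u} k) : PComod k H where
  carrier := Rsub k H V
  ρ := (sigmaInvariant_Rsub k H V).coact
  isPartialComodule := isPartialComodule_Rsub V

def cofreeLift (A : PComod k H) {g : A.carrier →ₗ[k] ParProd k H V}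
    (hg : IsSigmaHom k H A.ρ g) : A ⟶ cofree k H V :=
  ⟨g.codRestrict _ fun a => range_le_Rsub A.isPartialComodule hg ⟨a, rfl⟩,
    (sigmaInvariant_Rsub k H V).rTensor_comp_eq_coact_comp hg⟩

lemma isSigmaHom_cofree_subtype : IsSigmaHom k H (cofree k H V).ρ (Rsub k H V).subtype :=
  (sigmaInvariant_Rsub k H V).isSigmaHom_subtype

lemma cofree_hom_ext {A : PComod k H} {f g : A ⟶ cofree k H V}
    (h : ∀ a n, (f.1 a).1 n = (g.1 a).1 n) : f = g :=
  Subtype.ext (LinearMap.ext fun a => Subtype.ext (funext (h a)))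

end Cofree

section Adjunction

variable (k : Type u) [Field k] (H : Type u) [Ring H] [HopfAlgebra k H]

open LinearMap

lemma mapCore_id {V : ModuleCat.{u} k} (n : ℕ) :
    mapCore k H (LinearMap.id (M := V)) n = LinearMap.id := by
  induction n with
  | zero => rfl
  | succ n ih => exact (congrArg (rTensor H) ih).trans (rTensor_id _ _)

lemma mapCore_comp {V W Z : ModuleCat.{u} k} (φ : V →ₗ[k] W) (ψ : W →ₗ[k] Z) (n : ℕ) :
    mapCore k H (ψ ∘ₗ φ) n = mapCore k H ψ n ∘ₗ mapCore k H φ n := by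
  induction n with
  | zero => rfl
  | succ n ih => exact (congrArg (rTensor H) ih).trans (rTensor_comp _ _ _)

def cofreeFunctor : ModuleCat.{u} k ⥤ PComod k H where
  obj := cofree k H
  map {V _} φ := cofreeLift (cofree k H V) (isSigmaHom_cofree_subtype.parProdMap_comp φ.hom)
  map_id _ := cofree_hom_ext fun x n => congr($(mapCore_id k H n) (x.1 n))
  map_comp φ ψ := cofree_hom_ext fun x n => congr($(mapCore_comp k H φ.hom ψ.hom n) (x.1 n))

def cofreeAdjunction : pforget k H ⊣ cofreeFunctor k H where
  unit :=
    { app A := cofreeLift A (isSigmaHom_pi_coactPow A.ρ)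
      naturality _ B f := cofree_hom_ext fun a n =>
        congr($(((isSigmaHom_pi_coactPow B.ρ).comp f.2).proj_comp_eq n) a) }
  counit :=
    { app V := ModuleCat.ofHom ((proj 0 : ParProd k H V →ₗ[k] V) ∘ₗ (Rsub k H V).subtype) }
  right_triangle_components V := cofree_hom_ext fun x n =>
    congr($(isSigmaHom_cofree_subtype.proj_comp_eq n) x).symm

end Adjunction

/-- The functor `R : Vect_k → PMod^H`, sending `V` to the largest partial
subcomodule `R(V)` of `(∏_{n ≥ 0} V ⊗ H^{⊗n}, σ)` and a linear map `φ` to the restriction of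
`∏ₙ (φ ⊗ H^{⊗n})`, is right adjoint to the forgetful functor `U : PMod^H → Vect_k`; the unit
sends `m` to `(ρⁿ(m))ₙ` and the counit is the projection onto the degree-`0` component. -/
theorem cofree_right_adjoint
    (k : Type u) [Field k] (H : Type u) [Ring H] [HopfAlgebra k H] :
    ∃ (R : ModuleCat.{u} k ⥤ PComod k H) (adj : pforget k H ⊣ R)
      (e : ∀ V : ModuleCat.{u} k, (R.obj V).carrier ≃ₗ[k] ↥(Rsub k H V)),
      (∀ V : ModuleCat.{u} k,
        (canMap k H V ∘ₗ
            LinearMap.rTensor H ((Rsub k H V).subtype ∘ₗ (e V).toLinearMap)) ∘ₗ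
            (R.obj V).ρ =
          sigmaMap k H V ∘ₗ (Rsub k H V).subtype ∘ₗ (e V).toLinearMap) ∧
      (∀ (V W : ModuleCat.{u} k) (φ : V ⟶ W) (r : (R.obj V).carrier),
        (Rsub k H W).subtype ((e W) ((R.map φ).1 r)) =
          ParProdMap k H φ.hom ((Rsub k H V).subtype ((e V) r))) ∧
      (∀ (A : PComod k H) (a : A.carrier) (n : ℕ),
        (Rsub k H ((pforget k H).obj A)).subtype
            ((e ((pforget k H).obj A)) ((adj.unit.app A).1 a)) n =
          coactPow k H A.ρ n a) ∧
      (∀ (V : ModuleCat.{u} k) (r : (R.obj V).carrier),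
        adj.counit.app V r = ((Rsub k H V).subtype ((e V) r)) 0) :=
  ⟨cofreeFunctor k H, cofreeAdjunction k H, fun _ => LinearEquiv.refl k _,
    fun _ => isSigmaHom_cofree_subtype.symm, fun _ _ _ _ => rfl, fun _ _ _ => rfl,
    fun _ _ => rfl⟩

end
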